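/- arXiv:1409.3922 — 3 statements merged into one kernel-verified Lean document; each statement's English description precedes it below -/
import Mathlib

section
/- Let (X,μ) be a good Cantor measure space (X homeomorphic to the Cantor set, μ a continuous strictly positive Borel probability-type measure satisfying the Subset Condition). Let U ⊆ X be clopen, K ⊆ U compact, and let α be in the clopen values set μ(Clop(X)) with μ(K) < α ≤ μ(U). Then there exists a clopen set V with K ⊆ V ⊆ U and μ(V) = α. -/
/-!
Shrink `U` to a clopen `V₀ ⊇ K` with `μ V₀ < α`, using outer regularity of `μ` and the clopen
separation of the compact set `K` from the complement of an open set. Then add to `V₀` a clopen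
piece of `U \ V₀` of measure `α - μ V₀`: this value is itself a clopen value (the complement in
a clopen set of measure `α` of a clopen subset of measure `μ V₀`), so the Subset Condition
realizes it inside `U \ V₀`.
-/

open MeasureTheory Set

section SubsetCondition

variable {X : Type*} [TopologicalSpace X] [MeasurableSpace X] {μ : Measure X}

def MeasureTheory.Measure.SubsetCondition (μ : Measure X) : Prop :=
  ∀ U V : Set X, IsClopen U → IsClopen V → μ U < μ V → ∃ W, W ⊆ V ∧ IsClopen W ∧ μ W = μ U

lemma exists_isClopen_subset_measure_eq_of_le (hsc : μ.SubsetCondition)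
    {A B : Set X} (hA : IsClopen A) (hB : IsClopen B) (hAB : μ A ≤ μ B) :
    ∃ W, W ⊆ B ∧ IsClopen W ∧ μ W = μ A := by
  rcases hAB.eq_or_lt with h | h
  · exact ⟨B, subset_rfl, hB, h.symm⟩
  · exact hsc A B hA hB h

variable [OpensMeasurableSpace X]

lemma exists_isClopen_measure_eq_sub (hsc : μ.SubsetCondition)
    {A V : Set X} (hA : IsClopen A) (hV : IsClopen V) (hVA : μ V < μ A) :
    ∃ D, IsClopen D ∧ μ D = μ A - μ V := by
  obtain ⟨W, hWA, hW, hWμ⟩ := hsc V A hV hA hVA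
  refine ⟨A \ W, hA.diff hW, ?_⟩
  rw [measure_sdiff hWA hW.isOpen.measurableSet.nullMeasurableSet (hWμ ▸ hVA.ne_top), hWμ]

lemma exists_isClopen_between_measure_eq (hsc : μ.SubsetCondition)
    {V₀ U : Set X} (hV₀ : IsClopen V₀) (hU : IsClopen U) (hV₀U : V₀ ⊆ U)
    {α : ENNReal} (hα : ∃ A : Set X, IsClopen A ∧ μ A = α) (h1 : μ V₀ < α) (h2 : α ≤ μ U) :
    ∃ V : Set X, IsClopen V ∧ V₀ ⊆ V ∧ V ⊆ U ∧ μ V = α := by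
  obtain ⟨A, hA, rfl⟩ := hα
  obtain ⟨D, hD, hDμ⟩ := exists_isClopen_measure_eq_sub hsc hA hV₀ h1
  have hD_le : μ D ≤ μ (U \ V₀) := by
    rw [hDμ, measure_sdiff hV₀U hV₀.isOpen.measurableSet.nullMeasurableSet h1.ne_top]
    exact tsub_le_tsub_right h2 _
  obtain ⟨W, hW_sub, hW, hWμ⟩ :=
    exists_isClopen_subset_measure_eq_of_le hsc hD (hU.diff hV₀) hD_le
  refine ⟨V₀ ∪ W, hV₀.union hW, subset_union_left,
    union_subset hV₀U (hW_sub.trans sdiff_subset), ?_⟩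
  rw [measure_union (disjoint_sdiff_right.mono_right hW_sub) hW.isOpen.measurableSet, hWμ, hDμ,
    add_tsub_cancel_of_le h1.le]

end SubsetCondition

lemma IsCompact.exists_isClopen_subset_measure_lt {X : Type*} [TopologicalSpace X]
    [CompactSpace X] [T2Space X] [TotallyDisconnectedSpace X] [MeasurableSpace X]
    {μ : Measure X} [μ.OuterRegular] {K U : Set X} (hK : IsCompact K) (hU : IsOpen U)
    (hKU : K ⊆ U) {α : ENNReal} (h : μ K < α) :
    ∃ V : Set X, IsClopen V ∧ K ⊆ V ∧ V ⊆ U ∧ μ V < α := by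
  obtain ⟨O, hKO, hO, hOα⟩ := K.exists_isOpen_lt_of_lt α h
  obtain ⟨V, hV, hKV, hVOU⟩ :=
    exists_clopen_of_closed_subset_open hK.isClosed (hO.inter hU) (subset_inter hKO hKU)
  exact ⟨V, hV, hKV, hVOU.trans inter_subset_right,
    (measure_mono (hVOU.trans inter_subset_left)).trans_lt hOα⟩

theorem stmt0_general {X : Type*} [TopologicalSpace X] [CompactSpace X]
    [TopologicalSpace.MetrizableSpace X] [TotallyDisconnectedSpace X]
    [MeasurableSpace X] [BorelSpace X]
    (μ : Measure X) [IsFiniteMeasure μ]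
    (hsc : ∀ U V : Set X, IsClopen U → IsClopen V → μ U < μ V →
      ∃ W, W ⊆ V ∧ IsClopen W ∧ μ W = μ U)
    (U : Set X) (hU : IsClopen U) (K : Set X) (hK : IsCompact K) (hKU : K ⊆ U)
    (α : ENNReal) (hα : ∃ A : Set X, IsClopen A ∧ μ A = α)
    (h1 : μ K < α) (h2 : α ≤ μ U) :
    ∃ V : Set X, IsClopen V ∧ K ⊆ V ∧ V ⊆ U ∧ μ V = α := by
  have : μ.WeaklyRegular := .of_pseudoMetrizableSpace_of_isFiniteMeasure μ
  obtain ⟨V₀, hV₀, hKV₀, hV₀U, hV₀α⟩ := hK.exists_isClopen_subset_measure_lt hU.isOpen hKU h1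
  obtain ⟨V, hV, hV₀V, hVU, hVα⟩ := exists_isClopen_between_measure_eq hsc hV₀ hU hV₀U hα hV₀α h2
  exact ⟨V, hV, hKV₀.trans hV₀V, hVU, hVα⟩

/-- Improved Subset Condition in good Cantor measure spaces. -/
theorem stmt0 {X : Type*} [TopologicalSpace X] [CompactSpace X] [T2Space X]
    [TopologicalSpace.MetrizableSpace X] [TotallyDisconnectedSpace X]
    [MeasurableSpace X] [BorelSpace X]
    (μ : Measure X) [IsFiniteMeasure μ]
    (hperf : ∀ x : X, ¬ IsOpen ({x} : Set X))
    (hcont : ∀ x : X, μ {x} = 0)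
    (hpos : ∀ U : Set X, IsOpen U → U.Nonempty → 0 < μ U)
    (hsc : ∀ U V : Set X, IsClopen U → IsClopen V → μ U < μ V →
      ∃ W, W ⊆ V ∧ IsClopen W ∧ μ W = μ U)
    (U : Set X) (hU : IsClopen U) (K : Set X) (hK : IsCompact K) (hKU : K ⊆ U)
    (α : ENNReal) (hα : ∃ A : Set X, IsClopen A ∧ μ A = α)
    (h1 : μ K < α) (h2 : α ≤ μ U) :
    ∃ V : Set X, IsClopen V ∧ K ⊆ V ∧ V ⊆ U ∧ μ V = α :=
  stmt0_general μ hsc U hU K hK hKU α hα h1 h2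
end

section
/- Any homeomorphism f : A → B between closed nowhere dense subsets A, B of the Cantor cube X = {0,1}^ω extends to a homeomorphism of X onto itself. -/
/-!
Build, level by level, finer and finer partitions of the cube into pairs `(W, Z)` of clopen sets,
with `f` mapping `A ∩ W` onto `B ∩ Z`. At level `n` every pair meeting `A` has both sides inside
cylinders of length `n`, while a pair missing `A` (a free pair) also misses `B` and is never
refined again. To pass to level `n + 1`, a pair `(W, Z)` meeting `A` is cut along the length
`n + 1` prefixes of `a` and of `f a` for `a ∈ A ∩ W`; what is left over, `W` and `Z` minus clopen
neighbourhoods of these classes, becomes a new free pair, which can be made nonempty on both sides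
since `A` and `B` are nowhere dense. Every point outside `A` (resp. `B`) eventually lies in a free
pair, and two nonempty clopen subsets of the cube are homeomorphic (split off the first coordinate
and induct on the length of the cylinders making up the set). Gluing `f` with homeomorphisms
between the two sides of all free pairs gives a bijection of the cube which is continuous at the
points of `A` because the pairs around them shrink, hence a homeomorphism by compactness.
-/

open Set Function Topology PiNat

section PairPartition

variable {α β : Type*}

structure IsPairPartition (Q : Set (Set α × Set β)) (p : Set α × Set β) : Prop where
  subset : ∀ q ∈ Q, q.1 ⊆ p.1 ∧ q.2 ⊆ p.2
  cover_fst : ∀ x ∈ p.1, ∃ q ∈ Q, x ∈ q.1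
  cover_snd : ∀ y ∈ p.2, ∃ q ∈ Q, y ∈ q.2
  pairwise_disjoint : Q.Pairwise fun q q' => Disjoint q.1 q'.1 ∧ Disjoint q.2 q'.2

namespace IsPairPartition

variable {Q : Set (Set α × Set β)} {p q q' : Set α × Set β}

lemma eq_of_mem_fst (hQ : IsPairPartition Q p) (hq : q ∈ Q) (hq' : q' ∈ Q) {x : α}
    (hx : x ∈ q.1) (hx' : x ∈ q'.1) : q = q' :=
  by_contra fun hne => (hQ.pairwise_disjoint hq hq' hne).1.notMem_of_mem_left hx hx'

lemma eq_of_mem_snd (hQ : IsPairPartition Q p) (hq : q ∈ Q) (hq' : q' ∈ Q) {y : β}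
    (hy : y ∈ q.2) (hy' : y ∈ q'.2) : q = q' :=
  by_contra fun hne => (hQ.pairwise_disjoint hq hq' hne).2.notMem_of_mem_left hy hy'

lemma singleton (p : Set α × Set β) : IsPairPartition {p} p where
  subset q hq := by rw [mem_singleton_iff.1 hq]; exact ⟨subset_rfl, subset_rfl⟩
  cover_fst x hx := ⟨p, rfl, hx⟩
  cover_snd y hy := ⟨p, rfl, hy⟩
  pairwise_disjoint := pairwise_singleton _ _

lemma biUnion (hQ : IsPairPartition Q p) {R : Set α × Set β → Set (Set α × Set β)}
    (hR : ∀ q ∈ Q, IsPairPartition (R q) q) : IsPairPartition (⋃ q ∈ Q, R q) p where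
  subset r hr := by
    obtain ⟨q, hq, hrq⟩ := mem_iUnion₂.1 hr
    obtain ⟨h₁, h₂⟩ := (hR q hq).subset r hrq
    exact ⟨h₁.trans (hQ.subset q hq).1, h₂.trans (hQ.subset q hq).2⟩
  cover_fst x hx := by
    obtain ⟨q, hq, hxq⟩ := hQ.cover_fst x hx
    obtain ⟨r, hr, hxr⟩ := (hR q hq).cover_fst x hxq
    exact ⟨r, mem_biUnion hq hr, hxr⟩
  cover_snd y hy := by
    obtain ⟨q, hq, hyq⟩ := hQ.cover_snd y hy
    obtain ⟨r, hr, hyr⟩ := (hR q hq).cover_snd y hyq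
    exact ⟨r, mem_biUnion hq hr, hyr⟩
  pairwise_disjoint r hr r' hr' hne := by
    obtain ⟨q, hq, hrq⟩ := mem_iUnion₂.1 hr
    obtain ⟨q', hq', hrq'⟩ := mem_iUnion₂.1 hr'
    obtain rfl | hqq' := eq_or_ne q q'
    · exact (hR q hq).pairwise_disjoint hrq hrq' hne
    obtain ⟨h₁, h₂⟩ := (hR q hq).subset r hrq
    obtain ⟨h₁', h₂'⟩ := (hR q' hq').subset r' hrq'
    have := hQ.pairwise_disjoint hq hq' hqq'
    exact ⟨this.1.mono h₁ h₁', this.2.mono h₂ h₂'⟩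

lemma insert_compl {s : Set α} {t : Set β} (hQ : IsPairPartition Q (sᶜ, tᶜ)) :
    IsPairPartition (insert (s, t) Q) (univ, univ) where
  subset _ _ := ⟨subset_univ _, subset_univ _⟩
  cover_fst x _ := by
    by_cases hx : x ∈ s
    · exact ⟨(s, t), mem_insert _ _, hx⟩
    · obtain ⟨q, hq, hxq⟩ := hQ.cover_fst x hx
      exact ⟨q, mem_insert_of_mem _ hq, hxq⟩
  cover_snd y _ := by
    by_cases hy : y ∈ t
    · exact ⟨(s, t), mem_insert _ _, hy⟩
    · obtain ⟨q, hq, hyq⟩ := hQ.cover_snd y hy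
      exact ⟨q, mem_insert_of_mem _ hq, hyq⟩
  pairwise_disjoint := by
    refine pairwise_insert.2 ⟨hQ.pairwise_disjoint, fun q hq _ => ?_⟩
    obtain ⟨h₁, h₂⟩ := hQ.subset q hq
    have h₁ : Disjoint s q.1 := disjoint_compl_right.mono_right h₁
    have h₂ : Disjoint t q.2 := disjoint_compl_right.mono_right h₂
    exact ⟨⟨h₁, h₂⟩, h₁.symm, h₂.symm⟩

lemma insert_sdiff {ι : Type*} {U : Set α} {V : Set β} {C : ι → Set α} {C' : ι → Set β}
    (hCU : ∀ i, C i ⊆ U) (hC'V : ∀ i, C' i ⊆ V) (hC : Pairwise (Disjoint on C))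
    (hC' : Pairwise (Disjoint on C')) (R : Set ι) :
    IsPairPartition (insert (U \ ⋃ i ∈ R, C i, V \ ⋃ i ∈ R, C' i) ((fun i => (C i, C' i)) '' R))
      (U, V) where
  subset := by
    rintro q (rfl | ⟨i, -, rfl⟩)
    exacts [⟨sdiff_subset, sdiff_subset⟩, ⟨hCU i, hC'V i⟩]
  cover_fst x hx := by
    by_cases hxC : x ∈ ⋃ i ∈ R, C i
    · obtain ⟨i, hi, hxi⟩ := mem_iUnion₂.1 hxC
      exact ⟨_, mem_insert_of_mem _ (mem_image_of_mem _ hi), hxi⟩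
    · exact ⟨_, mem_insert _ _, hx, hxC⟩
  cover_snd y hy := by
    by_cases hyC : y ∈ ⋃ i ∈ R, C' i
    · obtain ⟨i, hi, hyi⟩ := mem_iUnion₂.1 hyC
      exact ⟨_, mem_insert_of_mem _ (mem_image_of_mem _ hi), hyi⟩
    · exact ⟨_, mem_insert _ _, hy, hyC⟩
  pairwise_disjoint := by
    refine pairwise_insert.2 ⟨Set.Pairwise.image fun i _ j _ hij => ?_, ?_⟩
    · have hij : i ≠ j := fun h => hij (h ▸ rfl)
      exact ⟨hC hij, hC' hij⟩
    rintro _ ⟨i, hi, rfl⟩ -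
    have h₁ : Disjoint (U \ ⋃ i ∈ R, C i) (C i) :=
      disjoint_sdiff_left.mono_right (subset_biUnion_of_mem hi)
    have h₂ : Disjoint (V \ ⋃ i ∈ R, C' i) (C' i) :=
      disjoint_sdiff_left.mono_right (subset_biUnion_of_mem hi)
    exact ⟨⟨h₁, h₂⟩, h₁.symm, h₂.symm⟩

lemma bijOn {φ : α → β} (hQ : IsPairPartition Q p) (hφ : ∀ q ∈ Q, BijOn φ q.1 q.2) :
    BijOn φ p.1 p.2 := by
  refine ⟨fun x hx => ?_, fun x hx x' hx' hxx' => ?_, fun y hy => ?_⟩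
  · obtain ⟨q, hq, hxq⟩ := hQ.cover_fst x hx
    exact (hQ.subset q hq).2 ((hφ q hq).mapsTo hxq)
  · obtain ⟨q, hq, hxq⟩ := hQ.cover_fst x hx
    obtain ⟨q', hq', hxq'⟩ := hQ.cover_fst x' hx'
    obtain rfl := hQ.eq_of_mem_snd hq hq' ((hφ q hq).mapsTo hxq)
      (hxx' ▸ (hφ q' hq').mapsTo hxq')
    exact (hφ q hq).injOn hxq hxq' hxx'
  · obtain ⟨q, hq, hyq⟩ := hQ.cover_snd y hy
    obtain ⟨x, hxq, rfl⟩ := (hφ q hq).surjOn hyq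
    exact ⟨x, (hQ.subset q hq).1 hxq, rfl⟩

end IsPairPartition

structure Refines (A : Set α) (P P' : Set (Set α × Set β)) : Prop where
  exists_superset : ∀ q ∈ P', ∃ p ∈ P, q.1 ⊆ p.1 ∧ q.2 ⊆ p.2
  mem_of_disjoint : ∀ p ∈ P, Disjoint p.1 A → p ∈ P'

lemma Refines.trans {A : Set α} {P P' P'' : Set (Set α × Set β)} (h : Refines A P P')
    (h' : Refines A P' P'') : Refines A P P'' where
  exists_superset q hq := by
    obtain ⟨p', hp', h₁', h₂'⟩ := h'.exists_superset q hq
    obtain ⟨p, hp, h₁, h₂⟩ := h.exists_superset p' hp'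
    exact ⟨p, hp, h₁'.trans h₁, h₂'.trans h₂⟩
  mem_of_disjoint p hp hpA := h'.mem_of_disjoint p (h.mem_of_disjoint p hp hpA) hpA

def freePieces (A : Set α) (P : ℕ → Set (Set α × Set β)) : Set (Set α × Set β) :=
  {p | ∃ n, p ∈ P n ∧ Disjoint p.1 A}

variable {A : Set α} {P : ℕ → Set (Set α × Set β)}

lemma refines_of_le (hPP : ∀ n, Refines A (P n) (P (n + 1))) {m n : ℕ} (hmn : m ≤ n) :
    Refines A (P m) (P n) := by
  induction n, hmn using Nat.le_induction with
  | base => exact ⟨fun q hq => ⟨q, hq, subset_rfl, subset_rfl⟩, fun p hp _ => hp⟩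
  | succ n _ ih => exact ih.trans (hPP n)

lemma pairwise_freePieces {r : Set α × Set β} (hP : ∀ n, IsPairPartition (P n) r)
    (hPP : ∀ n, Refines A (P n) (P (n + 1))) :
    (freePieces A P).Pairwise fun q q' => Disjoint q.1 q'.1 ∧ Disjoint q.2 q'.2 := by
  rintro q ⟨m, hqm, hqA⟩ q' ⟨m', hqm', hqA'⟩
  exact (hP (max m m')).pairwise_disjoint
    ((refines_of_le hPP (le_max_left m m')).mem_of_disjoint q hqm hqA)
    ((refines_of_le hPP (le_max_right m m')).mem_of_disjoint q' hqm' hqA')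

lemma snd_subset_of_mem_freePieces {r : Set α × Set β} (hP : ∀ n, IsPairPartition (P n) r)
    (hPP : ∀ n, Refines A (P n) (P (n + 1))) {n : ℕ} {p q : Set α × Set β} (hp : p ∈ P n)
    (hq : q ∈ freePieces A P) {x : α} (hxp : x ∈ p.1) (hxq : x ∈ q.1) : q.2 ⊆ p.2 := by
  obtain ⟨m, hqm, hqA⟩ := hq
  obtain ⟨p', hp', h₁, h₂⟩ := (refines_of_le hPP (le_max_right m n)).exists_superset q
    ((refines_of_le hPP (le_max_left m n)).mem_of_disjoint q hqm hqA)
  rwa [(hP n).eq_of_mem_fst hp' hp (h₁ hxq) hxp] at h₂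

end PairPartition

theorem bijOn_of_eq_equiv {α β : Type*} {s : Set α} {t : Set β} (e : s ≃ t) {φ : α → β}
    (hφ : ∀ x : s, φ x = e x) : BijOn φ s t := by
  refine ⟨fun x hx => hφ ⟨x, hx⟩ ▸ (e ⟨x, hx⟩).2, fun x hx x' hx' h => ?_, fun y hy => ?_⟩
  · rw [hφ ⟨x, hx⟩, hφ ⟨x', hx'⟩, Subtype.coe_inj] at h
    exact congrArg Subtype.val (e.injective h)
  · exact ⟨e.symm ⟨y, hy⟩, (e.symm ⟨y, hy⟩).2, by rw [hφ, e.apply_symm_apply]⟩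

theorem Homeomorph.exists_bijOn_continuousOn {X : Type*} [TopologicalSpace X] {C D : Set X}
    (e : C ≃ₜ D) : ∃ g : X → X, BijOn g C D ∧ ContinuousOn g C := by
  classical
  let g : X → X := fun x => if h : x ∈ C then e ⟨x, h⟩ else x
  have hg (x : C) : g x = e x := dif_pos x.2
  refine ⟨g, bijOn_of_eq_equiv e.toEquiv hg, continuousOn_iff_continuous_domRestrict.2 ?_⟩
  exact (continuous_subtype_val.comp e.continuous).congr fun x => (hg x).symm

theorem exists_homeomorph_of_isPairPartition {X : Type*} [TopologicalSpace X] [CompactSpace X]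
    [T2Space X] {A B : Set X} (f : A ≃ₜ B) {Q : Set (Set X × Set X)}
    (hQ : IsPairPartition Q (Aᶜ, Bᶜ)) (hQopen : ∀ q ∈ Q, IsOpen q.1) (g : Set X × Set X → X → X)
    (hg : ∀ q ∈ Q, BijOn (g q) q.1 q.2 ∧ ContinuousOn (g q) q.1)
    (hf : ∀ a : A, ∀ U ∈ 𝓝 (f a : X), ∃ W ∈ 𝓝 (a : X),
      (∀ a' : A, (a' : X) ∈ W → (f a' : X) ∈ U) ∧ ∀ q ∈ Q, (q.1 ∩ W).Nonempty → q.2 ⊆ U) :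
    ∃ F : X ≃ₜ X, ∀ a : A, F a = f a := by
  classical
  choose! π hπQ hπ using hQ.cover_fst
  let Φ : X → X := fun x => if h : x ∈ A then f ⟨x, h⟩ else g (π x) x
  have hΦA (a : A) : Φ a = f a := dif_pos a.2
  have hΦQ : ∀ q ∈ Q, EqOn Φ (g q) q.1 := by
    intro q hq x hx
    have hxA : x ∉ A := (hQ.subset q hq).1 hx
    simp only [Φ, dif_neg hxA, hQ.eq_of_mem_fst (hπQ x hxA) hq (hπ x hxA) hx]
  have hbij : Bijective Φ := by
    rw [← bijOn_univ]
    refine hQ.insert_compl.bijOn ?_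
    rintro q (rfl | hq)
    · exact bijOn_of_eq_equiv f.toEquiv hΦA
    · exact (hg q hq).1.congr (hΦQ q hq).symm
  have hcont : Continuous Φ := by
    refine continuous_iff_continuousAt.2 fun x => ?_
    by_cases hx : x ∈ A
    · lift x to A using hx
      intro U hU
      rw [hΦA] at hU
      obtain ⟨W, hW, hWA, hWQ⟩ := hf x U hU
      rw [Filter.mem_map]
      filter_upwards [hW] with y hy
      by_cases hyA : y ∈ A
      · rw [mem_preimage, ← Subtype.coe_mk y hyA, hΦA]
        exact hWA ⟨y, hyA⟩ hy
      · rw [mem_preimage, hΦQ _ (hπQ y hyA) (hπ y hyA)]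
        exact hWQ _ (hπQ y hyA) ⟨y, hπ y hyA, hy⟩ ((hg _ (hπQ y hyA)).1.mapsTo (hπ y hyA))
    · have hW : (π x).1 ∈ 𝓝 x := (hQopen _ (hπQ x hx)).mem_nhds (hπ x hx)
      exact ((hg _ (hπQ x hx)).2.continuousAt hW).congr
        (Filter.eventuallyEq_of_mem hW (hΦQ _ (hπQ x hx)).symm)
  exact ⟨hcont.homeoOfEquivCompactToT2 (f := Equiv.ofBijective Φ hbij), hΦA⟩

section Matched

variable {X : Type*} [TopologicalSpace X] {A B : Set X}

structure IsMatched (f : A ≃ₜ B) (p : Set X × Set X) : Prop where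
  isClopen_fst : IsClopen p.1
  isClopen_snd : IsClopen p.2
  nonempty_fst : p.1.Nonempty
  nonempty_snd : p.2.Nonempty
  mem_fst_iff : ∀ a : A, (a : X) ∈ p.1 ↔ (f a : X) ∈ p.2

variable {f : A ≃ₜ B} {p : Set X × Set X}

lemma IsMatched.disjoint_snd (hp : IsMatched f p) (hpA : Disjoint p.1 A) : Disjoint p.2 B := by
  refine disjoint_left.2 fun y hy hyB => hpA.notMem_of_mem_left ?_ (f.symm ⟨y, hyB⟩).2
  rwa [hp.mem_fst_iff, f.apply_symm_apply]

lemma IsMatched.sdiff_biUnion (hp : IsMatched f p) {ι : Type*} {R : Set ι} (hR : R.Finite)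
    {C C' : ι → Set X} (hC : ∀ i, IsClopen (C i)) (hC' : ∀ i, IsClopen (C' i))
    (hne : (p.1 \ ⋃ i ∈ R, C i).Nonempty) (hne' : (p.2 \ ⋃ i ∈ R, C' i).Nonempty)
    (hAC : ∀ a : A, (a : X) ∈ p.1 → ∃ i ∈ R, (a : X) ∈ C i ∧ (f a : X) ∈ C' i) :
    IsMatched f (p.1 \ ⋃ i ∈ R, C i, p.2 \ ⋃ i ∈ R, C' i) ∧ Disjoint (p.1 \ ⋃ i ∈ R, C i) A := by
  have hA : Disjoint (p.1 \ ⋃ i ∈ R, C i) A := by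
    refine disjoint_left.2 fun x ⟨hxp, hxC⟩ hxA => hxC ?_
    obtain ⟨i, hi, hxi, -⟩ := hAC ⟨x, hxA⟩ hxp
    exact mem_biUnion hi hxi
  have hB : Disjoint (p.2 \ ⋃ i ∈ R, C' i) B := by
    refine disjoint_left.2 fun y ⟨hyp, hyC⟩ hyB => hyC ?_
    have ha : (f.symm ⟨y, hyB⟩ : X) ∈ p.1 := by rwa [hp.mem_fst_iff, f.apply_symm_apply]
    obtain ⟨i, hi, -, hyi⟩ := hAC _ ha
    rw [f.apply_symm_apply] at hyi
    exact mem_biUnion hi hyi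
  refine ⟨⟨hp.isClopen_fst.diff (hR.isClopen_biUnion fun i _ => hC i),
    hp.isClopen_snd.diff (hR.isClopen_biUnion fun i _ => hC' i), hne, hne', fun a => ?_⟩, hA⟩
  exact iff_of_false (hA.notMem_of_mem_right a.2) (hB.notMem_of_mem_right (f a).2)

end Matched

section Profinite

variable {X : Type*} [TopologicalSpace X] [CompactSpace X] [T2Space X] [TotallyDisconnectedSpace X]
  {A : Set X}

theorem IsNowhereDense.exists_isClopen_subset_disjoint (hAnd : IsNowhereDense A) (hA : IsClosed A)
    {U : Set X} (hU : IsOpen U) (hUne : U.Nonempty) :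
    ∃ N, IsClopen N ∧ N.Nonempty ∧ N ⊆ U ∧ Disjoint N A := by
  have hUA : ¬U ⊆ A := fun hUA => hUne.ne_empty <| subset_empty_iff.1 <|
    hA.isNowhereDense_iff.1 hAnd ▸ interior_maximal hUA hU
  obtain ⟨x, hxU, hxA⟩ := not_subset.1 hUA
  obtain ⟨N, hN, hxN, hNUA⟩ := compact_exists_isClopen_in_isOpen (hU.sdiff hA) ⟨hxU, hxA⟩
  exact ⟨N, hN, ⟨x, hxN⟩, hNUA.trans sdiff_subset, disjoint_of_subset_left hNUA disjoint_sdiff_left⟩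

theorem exists_isClopen_fibers (hA : IsClosed A) {U N : Set X} (hU : IsClopen U)
    (hN : IsClopen N) (hNA : Disjoint N A) {ι : Type*} [Finite ι] (τ : A → ι)
    (hτ : ∀ i, IsClosed (τ ⁻¹' {i})) {D : ι → Set X} (hD : ∀ i, IsClopen (D i))
    (hτD : ∀ a : A, (a : X) ∈ U → (a : X) ∈ D (τ a)) :
    ∃ C : ι → Set X, (∀ i, IsClopen (C i)) ∧ (∀ i, C i ⊆ (U ∩ D i) \ N) ∧
      Pairwise (Disjoint on C) ∧ ∀ a : A, ∀ i, (a : X) ∈ C i ↔ (a : X) ∈ U ∧ τ a = i := by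
  let K : ι → Set X := fun i => (↑) '' (τ ⁻¹' {i} ∩ (↑) ⁻¹' U)
  have hK (i : ι) : IsClosed (K i) := hA.isClosedEmbedding_subtypeVal.isClosedMap _
    ((hτ i).inter (hU.isClosed.preimage continuous_subtype_val))
  have hKD (i : ι) : K i ⊆ (U ∩ D i) \ N := by
    rintro _ ⟨a, ⟨rfl, haU⟩, rfl⟩
    exact ⟨⟨haU, hτD a haU⟩, fun haN => hNA.notMem_of_mem_left haN a.2⟩
  have hKd : univ.PairwiseDisjoint K := fun i _ j _ hij =>
    (disjoint_image_iff Subtype.val_injective).2 <|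
      ((disjoint_singleton.2 hij).preimage τ).mono inter_subset_left inter_subset_left
  obtain ⟨C, hC, hKC, hCD, -, hCd⟩ := exists_clopen_partition_of_clopen_cover hK
    (fun i => (hU.inter (hD i)).diff hN) hKD hKd
  have haC (a : A) (haU : (a : X) ∈ U) : (a : X) ∈ C (τ a) := hKC _ ⟨a, ⟨rfl, haU⟩, rfl⟩
  refine ⟨C, hC, hCD, pairwise_univ.1 hCd, fun a i => ⟨fun ha => ?_, ?_⟩⟩
  · have haU := (hCD i ha).1.1
    exact ⟨haU, by_contra fun hi => (hCd (mem_univ _) (mem_univ _) hi).notMem_of_mem_left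
      (haC a haU) ha⟩
  · rintro ⟨haU, rfl⟩
    exact haC a haU

end Profinite

section Cylinder

variable {E : Type*}

lemma mem_cylinder_of_subset {S : Set (ℕ → E)} {c x y : ℕ → E} {n : ℕ} (hS : S ⊆ cylinder c n)
    (hx : x ∈ S) (hy : y ∈ S) : y ∈ cylinder x n := by
  rw [mem_cylinder_iff_eq.1 (hS hx)]
  exact hS hy

variable [TopologicalSpace E] [DiscreteTopology E]

lemma exists_cylinder_subset {x : ℕ → E} {U : Set (ℕ → E)} (hU : U ∈ 𝓝 x) :
    ∃ n, cylinder x n ⊆ U := by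
  obtain ⟨_, ⟨y, n, rfl⟩, hxy, hyU⟩ :=
    (isTopologicalBasis_cylinders fun _ => E).mem_nhds_iff.1 hU
  exact ⟨n, mem_cylinder_iff_eq.1 hxy ▸ hyU⟩

lemma IsCompact.exists_cylinder_subset {C : Set (ℕ → E)} (hC : IsCompact C) (hCo : IsOpen C) :
    ∃ n, ∀ x ∈ C, cylinder x n ⊆ C := by
  choose! m hm using fun x (hx : x ∈ C) => _root_.exists_cylinder_subset (hCo.mem_nhds hx)
  obtain ⟨t, htC, hCt⟩ := hC.elim_nhds_subcover (fun x => cylinder x (m x)) fun x _ =>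
    (isOpen_cylinder (fun _ => E) x _).mem_nhds (self_mem_cylinder x _)
  refine ⟨t.sup m, fun x hx => ?_⟩
  obtain ⟨y, hy, hxy⟩ := mem_iUnion₂.1 (hCt hx)
  calc cylinder x (t.sup m) ⊆ cylinder x (m y) := cylinder_anti x (Finset.le_sup hy)
    _ = cylinder y (m y) := mem_cylinder_iff_eq.1 hxy
    _ ⊆ C := hm y (htC y hy)

end Cylinder

section Stages

variable {E : Type*} [TopologicalSpace E] [DiscreteTopology E] {A B : Set (ℕ → E)}

def IsSmall (n : ℕ) (p : Set (ℕ → E) × Set (ℕ → E)) : Prop :=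
  (∃ x, p.1 ⊆ cylinder x n) ∧ ∃ y, p.2 ⊆ cylinder y n

structure IsPiece (f : A ≃ₜ B) (n : ℕ) (p : Set (ℕ → E) × Set (ℕ → E)) : Prop where
  isMatched : IsMatched f p
  isSmall : ¬Disjoint p.1 A → IsSmall n p

structure IsStage (f : A ≃ₜ B) (n : ℕ) (P : Set (Set (ℕ → E) × Set (ℕ → E))) : Prop where
  isPairPartition : IsPairPartition P (univ, univ)
  isPiece : ∀ p ∈ P, IsPiece f n p

variable {f : A ≃ₜ B}

theorem IsMatched.exists_isPairPartition_isPiece [Finite E] (hA : IsClosed A)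
    (hAnd : IsNowhereDense A) (hB : IsClosed B) (hBnd : IsNowhereDense B)
    {p : Set (ℕ → E) × Set (ℕ → E)} (hp : IsMatched f p) (n : ℕ) :
    ∃ Q, IsPairPartition Q p ∧ ∀ q ∈ Q, IsPiece f n q := by
  obtain ⟨U, V⟩ := p
  -- `N` and `M` are kept out of all the new pieces meeting `A`, so the leftover pair is nonempty.
  obtain ⟨N, hN, ⟨x₀, hx₀⟩, hNU, hNA⟩ :=
    hAnd.exists_isClopen_subset_disjoint hA hp.isClopen_fst.isOpen hp.nonempty_fst
  obtain ⟨M, hM, ⟨y₀, hy₀⟩, hMV, hMB⟩ :=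
    hBnd.exists_isClopen_subset_disjoint hB hp.isClopen_snd.isOpen hp.nonempty_snd
  let π : (ℕ → E) → Fin n → E := fun x k => x k
  have hπ : Continuous π := by fun_prop
  let τ : A → (Fin n → E) × (Fin n → E) := fun a => (π a, π (f a))
  have hτ : Continuous τ := (hπ.comp continuous_subtype_val).prodMk
    (hπ.comp (continuous_subtype_val.comp f.continuous))
  obtain ⟨C, hC, hCU, hCd, hCA⟩ := exists_isClopen_fibers hA hp.isClopen_fst hN hNA τ
    (fun i => (isClosed_discrete {i}).preimage hτ)
    (fun i => (isClopen_discrete {i.1}).preimage hπ) (fun a _ => rfl)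
  obtain ⟨C', hC', hC'V, hC'd, hC'B⟩ := exists_isClopen_fibers hB hp.isClopen_snd hM hMB
    (τ ∘ f.symm) (fun i => (isClosed_discrete {i}).preimage (hτ.comp f.symm.continuous))
    (fun i => (isClopen_discrete {i.2}).preimage hπ) (fun b _ => by simp [τ])
  have hCC' (a : A) (i) : (a : ℕ → E) ∈ C i ↔ (f a : ℕ → E) ∈ C' i := by
    rw [hCA, hC'B, comp_apply, f.symm_apply_apply, hp.mem_fst_iff]
  have haC (a : A) (haU : (a : ℕ → E) ∈ U) : (a : ℕ → E) ∈ C (τ a) := (hCA a _).2 ⟨haU, rfl⟩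
  let R := {i | ∃ a : A, (a : ℕ → E) ∈ U ∧ τ a = i}
  refine ⟨_, .insert_sdiff (fun i => (hCU i).trans (sdiff_subset.trans inter_subset_left))
    (fun i => (hC'V i).trans (sdiff_subset.trans inter_subset_left)) hCd hC'd R, ?_⟩
  rintro q (rfl | ⟨_, ⟨a, haU, rfl⟩, rfl⟩)
  · obtain ⟨hfree, hfreeA⟩ := hp.sdiff_biUnion R.toFinite hC hC'
      ⟨x₀, hNU hx₀, fun h => by obtain ⟨i, -, hi⟩ := mem_iUnion₂.1 h; exact (hCU i hi).2 hx₀⟩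
      ⟨y₀, hMV hy₀, fun h => by obtain ⟨i, -, hi⟩ := mem_iUnion₂.1 h; exact (hC'V i hi).2 hy₀⟩
      fun a haU => ⟨τ a, ⟨a, haU, rfl⟩, haC a haU, (hCC' a _).1 (haC a haU)⟩
    exact ⟨hfree, fun h => (h hfreeA).elim⟩
  · refine ⟨⟨hC _, hC' _, ⟨a, haC a haU⟩, ⟨f a, (hCC' a _).1 (haC a haU)⟩, fun a' => hCC' a' _⟩,
      fun _ => ⟨⟨a, fun x hx => ?_⟩, ⟨f a, fun y hy => ?_⟩⟩⟩
    · exact mem_cylinder_iff.2 fun k hk => congrFun (hCU _ hx).1.2 ⟨k, hk⟩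
    · exact mem_cylinder_iff.2 fun k hk => congrFun (hC'V _ hy).1.2 ⟨k, hk⟩

theorem IsStage.exists_refines [Finite E] (hA : IsClosed A) (hAnd : IsNowhereDense A)
    (hB : IsClosed B) (hBnd : IsNowhereDense B) {n : ℕ} {P : Set (Set (ℕ → E) × Set (ℕ → E))}
    (hP : IsStage f n P) : ∃ P', IsStage f (n + 1) P' ∧ Refines A P P' := by
  have (p) (hp : p ∈ P) : ∃ Q, IsPairPartition Q p ∧ (Disjoint p.1 A → Q = {p}) ∧
      ∀ q ∈ Q, IsPiece f (n + 1) q := by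
    by_cases hpA : Disjoint p.1 A
    · refine ⟨{p}, .singleton p, fun _ => rfl, fun q hq => ?_⟩
      rw [mem_singleton_iff.1 hq]
      exact ⟨(hP.isPiece p hp).isMatched, fun h => (h hpA).elim⟩
    · obtain ⟨Q, hQ, hQp⟩ :=
        (hP.isPiece p hp).isMatched.exists_isPairPartition_isPiece hA hAnd hB hBnd (n + 1)
      exact ⟨Q, hQ, fun h => (hpA h).elim, hQp⟩
  choose! Q hQ hQA hQp using this
  refine ⟨⋃ p ∈ P, Q p, ⟨hP.isPairPartition.biUnion hQ, fun q hq => ?_⟩, fun q hq => ?_,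
    fun p hp hpA => mem_biUnion hp (hQA p hp hpA ▸ mem_singleton p)⟩
  · obtain ⟨p, hp, hqp⟩ := mem_iUnion₂.1 hq
    exact hQp p hp q hqp
  · obtain ⟨p, hp, hqp⟩ := mem_iUnion₂.1 hq
    exact ⟨p, hp, (hQ p hp).subset q hqp⟩

variable (f) in
theorem exists_stages [Finite E] [Nonempty E] (hA : IsClosed A) (hAnd : IsNowhereDense A)
    (hB : IsClosed B) (hBnd : IsNowhereDense B) :
    ∃ P : ℕ → Set (Set (ℕ → E) × Set (ℕ → E)),
      (∀ n, IsStage f n (P n)) ∧ ∀ n, Refines A (P n) (P (n + 1)) := by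
  have h₀ : IsStage f 0 {(univ, univ)} := by
    refine ⟨.singleton _, fun p hp => ?_⟩
    obtain rfl := mem_singleton_iff.1 hp
    obtain ⟨x⟩ := (inferInstance : Nonempty (ℕ → E))
    exact ⟨⟨isClopen_univ, isClopen_univ, univ_nonempty, univ_nonempty,
      fun _ => iff_of_true trivial trivial⟩, fun _ => ⟨⟨x, by simp⟩, ⟨x, by simp⟩⟩⟩
  choose! step hstep using fun n P (hP : IsStage f n P) => hP.exists_refines hA hAnd hB hBnd
  let P : ℕ → Set (Set (ℕ → E) × Set (ℕ → E)) := fun n => Nat.rec {(univ, univ)} step n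
  have hP (n : ℕ) : IsStage f n (P n) := by
    induction n with
    | zero => exact h₀
    | succ n ih => exact (hstep n _ ih).1
  exact ⟨P, hP, fun n => (hstep n _ (hP n)).2⟩

variable {P : ℕ → Set (Set (ℕ → E) × Set (ℕ → E))}

theorem isPairPartition_freePieces (hP : ∀ n, IsStage f n (P n))
    (hPP : ∀ n, Refines A (P n) (P (n + 1))) (hA : IsClosed A) (hB : IsClosed B) :
    IsPairPartition (freePieces A P) (Aᶜ, Bᶜ) where
  subset := by
    rintro q ⟨n, hq, hqA⟩
    exact ⟨subset_compl_iff_disjoint_right.2 hqA,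
      subset_compl_iff_disjoint_right.2 (((hP n).isPiece q hq).isMatched.disjoint_snd hqA)⟩
  cover_fst x hx := by
    obtain ⟨n, hn⟩ := exists_cylinder_subset (hA.isOpen_compl.mem_nhds hx)
    obtain ⟨p, hp, hxp⟩ := (hP n).isPairPartition.cover_fst x trivial
    by_cases hpA : Disjoint p.1 A
    · exact ⟨p, ⟨n, hp, hpA⟩, hxp⟩
    obtain ⟨⟨c, hc⟩, -⟩ := ((hP n).isPiece p hp).isSmall hpA
    obtain ⟨a, hap, haA⟩ := not_disjoint_iff.1 hpA
    exact (hn (mem_cylinder_of_subset hc hxp hap) haA).elim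
  cover_snd y hy := by
    obtain ⟨n, hn⟩ := exists_cylinder_subset (hB.isOpen_compl.mem_nhds hy)
    obtain ⟨p, hp, hyp⟩ := (hP n).isPairPartition.cover_snd y trivial
    by_cases hpA : Disjoint p.1 A
    · exact ⟨p, ⟨n, hp, hpA⟩, hyp⟩
    obtain ⟨-, c, hc⟩ := ((hP n).isPiece p hp).isSmall hpA
    obtain ⟨a, hap, haA⟩ := not_disjoint_iff.1 hpA
    have hfa := (((hP n).isPiece p hp).isMatched.mem_fst_iff ⟨a, haA⟩).1 hap
    exact (hn (mem_cylinder_of_subset hc hyp hfa) (f ⟨a, haA⟩).2).elim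
  pairwise_disjoint := pairwise_freePieces (fun n => (hP n).isPairPartition) hPP

theorem exists_mem_nhds_of_stages (hP : ∀ n, IsStage f n (P n))
    (hPP : ∀ n, Refines A (P n) (P (n + 1))) (a : A) {U : Set (ℕ → E)}
    (hU : U ∈ 𝓝 (f a : ℕ → E)) : ∃ W ∈ 𝓝 (a : ℕ → E),
      (∀ a' : A, (a' : ℕ → E) ∈ W → (f a' : ℕ → E) ∈ U) ∧
        ∀ q ∈ freePieces A P, (q.1 ∩ W).Nonempty → q.2 ⊆ U := by
  obtain ⟨n, hn⟩ := exists_cylinder_subset hU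
  obtain ⟨p, hp, hap⟩ := (hP n).isPairPartition.cover_fst a trivial
  have hpf := ((hP n).isPiece p hp).isMatched
  obtain ⟨-, c, hc⟩ := ((hP n).isPiece p hp).isSmall (not_disjoint_iff.2 ⟨a, hap, a.2⟩)
  have hpU : p.2 ⊆ U := fun y hy => hn (mem_cylinder_of_subset hc ((hpf.mem_fst_iff a).1 hap) hy)
  refine ⟨p.1, hpf.isClopen_fst.isOpen.mem_nhds hap, fun a' ha' => hpU ((hpf.mem_fst_iff a').1 ha'),
    fun q hq ⟨x, hxq, hxp⟩ => ?_⟩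
  exact (snd_subset_of_mem_freePieces (fun n => (hP n).isPairPartition) hPP hp hq hxp hxq).trans hpU

end Stages

section Cantor

variable {α : Type*}

def seqCons (a : α) (x : ℕ → α) : ℕ → α := fun n => Nat.casesOn n a x

@[simp] lemma seqCons_zero (a : α) (x : ℕ → α) : seqCons a x 0 = a := rfl

@[simp] lemma seqCons_succ (a : α) (x : ℕ → α) (n : ℕ) : seqCons a x (n + 1) = x n := rfl

lemma seqCons_head_tail (x : ℕ → α) : seqCons (x 0) (fun n => x (n + 1)) = x := by
  funext n; cases n <;> rfl

lemma seqCons_injective (a : α) : Injective (seqCons a) :=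
  fun _ _ h => funext fun n => congrFun h (n + 1)

lemma continuous_seqCons [TopologicalSpace α] (a : α) : Continuous (seqCons a) :=
  continuous_pi fun n => by cases n <;> [exact continuous_const; exact continuous_apply _]

lemma seqCons_mem_cylinder (a : α) {x y : ℕ → α} {n : ℕ} (h : y ∈ cylinder x n) :
    seqCons a y ∈ cylinder (seqCons a x) (n + 1) := by
  rw [mem_cylinder_iff] at h ⊢
  rintro (_ | i) hi
  · rfl
  · exact h i (by omega)

lemma exists_continuous_bijOn_of_halves {C : Set (ℕ → Bool)} {G : Bool → (ℕ → Bool) → ℕ → Bool}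
    (hG : ∀ b, Continuous (G b)) (hGC : ∀ b, BijOn (G b) univ (seqCons b ⁻¹' C)) :
    ∃ g : (ℕ → Bool) → ℕ → Bool, Continuous g ∧ BijOn g univ C := by
  have hG' : Continuous fun p : Bool × (ℕ → Bool) => seqCons p.1 (G p.1 p.2) :=
    continuous_prod_of_discrete_left.2 fun b => (continuous_seqCons b).comp (hG b)
  refine ⟨fun y => seqCons (y 0) (G (y 0) fun n => y (n + 1)),
    hG'.comp (f := fun y : ℕ → Bool => (y 0, fun n => y (n + 1))) (by fun_prop),
    fun y _ => (hGC (y 0)).mapsTo (mem_univ _), fun y _ y' _ h => ?_, fun x hx => ?_⟩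
  · have h0 : y 0 = y' 0 := congrFun h 0
    have htail : G (y 0) (fun n => y (n + 1)) = G (y' 0) (fun n => y' (n + 1)) :=
      funext fun n => congrFun h (n + 1)
    rw [h0] at htail
    rw [← seqCons_head_tail y, ← seqCons_head_tail y', h0,
      (hGC (y' 0)).injOn (mem_univ _) (mem_univ _) htail]
  · obtain ⟨z, -, hz⟩ := (hGC (x 0)).surjOn (show _ ∈ seqCons (x 0) ⁻¹' C by
      rwa [mem_preimage, seqCons_head_tail])
    refine ⟨seqCons (x 0) z, mem_univ _, ?_⟩
    simp only [seqCons_zero, seqCons_succ, hz]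
    exact seqCons_head_tail x

lemma exists_continuous_bijOn_of_half {C : Set (ℕ → Bool)} {b : Bool} (hC : ∀ x ∈ C, x 0 = b)
    {G : (ℕ → Bool) → ℕ → Bool} (hG : Continuous G) (hGC : BijOn G univ (seqCons b ⁻¹' C)) :
    ∃ g : (ℕ → Bool) → ℕ → Bool, Continuous g ∧ BijOn g univ C := by
  refine ⟨seqCons b ∘ G, (continuous_seqCons b).comp hG, fun y _ => hGC.mapsTo (mem_univ _),
    fun y _ y' _ h => hGC.injOn (mem_univ _) (mem_univ _) (seqCons_injective b h), fun x hx => ?_⟩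
  obtain ⟨z, -, hz⟩ := hGC.surjOn (show _ ∈ seqCons b ⁻¹' C by
    rwa [mem_preimage, ← hC x hx, seqCons_head_tail])
  exact ⟨z, mem_univ _, by rw [comp_apply, hz, ← hC x hx, seqCons_head_tail]⟩

theorem exists_continuous_bijOn_of_forall_cylinder_subset (n : ℕ) {C : Set (ℕ → Bool)}
    (hC : C.Nonempty) (hCn : ∀ x ∈ C, cylinder x n ⊆ C) :
    ∃ g : (ℕ → Bool) → ℕ → Bool, Continuous g ∧ BijOn g univ C := by
  induction n generalizing C with
  | zero =>
    obtain ⟨x, hx⟩ := hC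
    obtain rfl : C = univ := eq_univ_of_univ_subset (cylinder_zero x ▸ hCn x hx)
    exact ⟨id, continuous_id, bijOn_id univ⟩
  | succ n ih =>
    have hCn' (b : Bool) : ∀ y ∈ seqCons b ⁻¹' C, cylinder y n ⊆ seqCons b ⁻¹' C :=
      fun y hy z hz => hCn _ hy (seqCons_mem_cylinder b hz)
    by_cases hne : ∀ b, (seqCons b ⁻¹' C).Nonempty
    · choose G hG hGC using fun b => ih (hne b) (hCn' b)
      exact exists_continuous_bijOn_of_halves hG hGC
    · push Not at hne
      obtain ⟨b, hb⟩ := hne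
      have hC0 (x) (hx : x ∈ C) : x 0 = !b := by
        rw [Bool.eq_not_iff]
        rintro rfl
        exact hb.subset (show _ ∈ seqCons (x 0) ⁻¹' C by rwa [mem_preimage, seqCons_head_tail])
      obtain ⟨x, hx⟩ := hC
      obtain ⟨G, hG, hGC⟩ := ih ⟨fun n => x (n + 1), by
        rwa [mem_preimage, ← hC0 x hx, seqCons_head_tail]⟩ (hCn' !b)
      exact exists_continuous_bijOn_of_half hC0 hG hGC

theorem IsClopen.nonempty_homeomorph {C : Set (ℕ → Bool)} (hC : IsClopen C) (hne : C.Nonempty) :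
    Nonempty ((ℕ → Bool) ≃ₜ C) := by
  obtain ⟨n, hn⟩ := hC.isClosed.isCompact.exists_cylinder_subset hC.isOpen
  obtain ⟨g, hg, hgC⟩ := exists_continuous_bijOn_of_forall_cylinder_subset n hne hn
  exact ⟨(hg.subtype_mk fun x => hgC.mapsTo (mem_univ x)).homeoOfEquivCompactToT2
    (f := (Equiv.Set.univ _).symm.trans (hgC.equiv g))⟩

theorem exists_bijOn_continuousOn_of_isClopen {C D : Set (ℕ → Bool)} (hC : IsClopen C)
    (hD : IsClopen D) (hCne : C.Nonempty) (hDne : D.Nonempty) :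
    ∃ g : (ℕ → Bool) → ℕ → Bool, BijOn g C D ∧ ContinuousOn g C := by
  obtain ⟨e₁⟩ := hC.nonempty_homeomorph hCne
  obtain ⟨e₂⟩ := hD.nonempty_homeomorph hDne
  exact (e₁.symm.trans e₂).exists_bijOn_continuousOn

end Cantor

/-- Any homeomorphism between closed nowhere dense subsets of the Cantor cube
extends to a homeomorphism of the whole cube. -/
theorem stmt1 (A B : Set (ℕ → Bool))
    (hA : IsClosed A) (hAnd : IsNowhereDense A)
    (hB : IsClosed B) (hBnd : IsNowhereDense B)
    (f : A ≃ₜ B) :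
    ∃ F : (ℕ → Bool) ≃ₜ (ℕ → Bool), ∀ a : A, F (a : ℕ → Bool) = (f a : ℕ → Bool) := by
  obtain ⟨P, hP, hPP⟩ := exists_stages f hA hAnd hB hBnd
  have hmatched (q) (hq : q ∈ freePieces A P) : IsMatched f q := by
    obtain ⟨n, hqn, -⟩ := hq
    exact ((hP n).isPiece q hqn).isMatched
  choose! g hg using fun q hq => exists_bijOn_continuousOn_of_isClopen (hmatched q hq).isClopen_fst
    (hmatched q hq).isClopen_snd (hmatched q hq).nonempty_fst (hmatched q hq).nonempty_snd
  exact exists_homeomorph_of_isPairPartition f (isPairPartition_freePieces hP hPP hA hB)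
    (fun q hq => (hmatched q hq).isClopen_fst.isOpen) g hg
    (fun a _ hU => exists_mem_nhds_of_stages hP hPP a hU)
end

section
/- Let (X,μ) be a good Cantor measure space. Any measure-preserving homeomorphism f : A → B between closed nowhere dense subsets A, B ⊆ X extends to a measure-preserving homeomorphism of X onto itself. -/
/-!
The extension `F` is the limit of a sequence of ever finer *matchings*: finite clopen partitions
of `X` whose pieces are paired with the pieces of a second clopen partition, paired pieces `P`,
`Q` having equal measure and satisfying `Q ∩ B = f (P ∩ A)`. A point `x` is sent to the unique
point common to the partners of the pieces containing `x`; this is a homeomorphism extending `f`,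
and it preserves `μ` because it does so on the pieces, which generate the Borel sets.

To refine a matched pair `(p, q)`, cover `p` by small clopen sets `c`. For each `c` meeting `A`,
the compact set `f (c ∩ A)` is approximated from outside by a clopen `Q ⊆ q` with
`Q ∩ B = f (c ∩ A)`; since `A` and `B` are nowhere dense, `μ (c ∩ A) < μ Q < μ c`, so the
Subset Condition gives a clopen `P` with `c ∩ A ⊆ P ⊆ c` and `μ P = μ Q`. What remains of `p`
misses `A` and what remains of `q` misses `B`, so the Subset Condition alone cuts them into small
matched pieces. Applying this once to `f` and once to `f.symm` makes both sides small.
-/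

open MeasureTheory Set Metric
open scoped ENNReal

namespace GoodMeasure

variable {X : Type*} [TopologicalSpace X]

def HasSubsetCondition [MeasurableSpace X] (μ : Measure X) : Prop :=
  ∀ U V : Set X, IsClopen U → IsClopen V → μ U < μ V → ∃ W, W ⊆ V ∧ IsClopen W ∧ μ W = μ U

section Approximation

variable [MeasurableSpace X] {μ : Measure X}

theorem HasSubsetCondition.exists_subset_of_le (hsc : HasSubsetCondition μ) {U V : Set X}
    (hU : IsClopen U) (hV : IsClopen V) (h : μ U ≤ μ V) : ∃ W, W ⊆ V ∧ IsClopen W ∧ μ W = μ U :=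
  h.lt_or_eq.elim (hsc U V hU hV) fun h => ⟨V, subset_rfl, hV, h.symm⟩

theorem measure_inter_lt_of_isNowhereDense [OpensMeasurableSpace X] [IsFiniteMeasure μ]
    [μ.IsOpenPosMeasure] {A U : Set X} (hA : IsClosed A) (hAnd : IsNowhereDense A)
    (hU : IsOpen U) (hne : U.Nonempty) : μ (U ∩ A) < μ U := by
  have hUA : (U \ A).Nonempty := by
    refine sdiff_nonempty.2 fun hUA => hne.ne_empty ?_
    exact subset_empty_iff.1 ((hA.isNowhereDense_iff.1 hAnd) ▸ interior_maximal hUA hU)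
  calc μ (U ∩ A) < μ (U ∩ A) + μ (U \ A) :=
        ENNReal.lt_add_right (measure_ne_top μ _) ((hU.sdiff hA).measure_ne_zero μ hUA)
    _ = μ U := measure_inter_add_sdiff U hA.measurableSet

variable [CompactSpace X] [T2Space X] [TotallyDisconnectedSpace X]

theorem exists_isClopen_between_measure_lt [μ.OuterRegular] {K U : Set X} (hK : IsClosed K)
    (hU : IsOpen U) (hKU : K ⊆ U) {r : ℝ≥0∞} (hr : μ K < r) :
    ∃ C, IsClopen C ∧ K ⊆ C ∧ C ⊆ U ∧ μ C < r := by
  obtain ⟨V, hKV, hV, hVr⟩ := Set.exists_isOpen_lt_of_lt K r hr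
  obtain ⟨C, hC, hKC, hCUV⟩ :=
    exists_clopen_of_closed_subset_open hK (hU.inter hV) (subset_inter hKU hKV)
  exact ⟨C, hC, hKC, hCUV.trans inter_subset_left,
    (measure_mono (hCUV.trans inter_subset_right)).trans_lt hVr⟩

theorem HasSubsetCondition.exists_isClopen_between_measure_eq (hsc : HasSubsetCondition μ)
    [OpensMeasurableSpace X] [IsFiniteMeasure μ] [μ.OuterRegular] {K V Q : Set X}
    (hK : IsClosed K) (hV : IsClopen V) (hQ : IsClopen Q) (hKV : K ⊆ V) (hKQ : μ K < μ Q)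
    (hQV : μ Q ≤ μ V) : ∃ W, IsClopen W ∧ K ⊆ W ∧ W ⊆ V ∧ μ W = μ Q := by
  obtain ⟨Z, hZ, hKZ, hZV, hZQ⟩ := exists_isClopen_between_measure_lt hK hV.isOpen hKV hKQ
  obtain ⟨Y, hYQ, hY, hYZ⟩ := hsc.exists_subset_of_le hZ hQ hZQ.le
  have hQY : μ (Q \ Y) = μ Q - μ Z := by
    rw [measure_sdiff hYQ hY.isClosed.measurableSet.nullMeasurableSet (measure_ne_top μ Y), hYZ]
  have hle : μ (Q \ Y) ≤ μ (V \ Z) := by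
    rw [hQY, measure_sdiff hZV hZ.isClosed.measurableSet.nullMeasurableSet (measure_ne_top μ Z)]
    exact tsub_le_tsub_right hQV _
  obtain ⟨W, hWVZ, hW, hWμ⟩ := hsc.exists_subset_of_le (hQ.diff hY) (hV.diff hZ) hle
  refine ⟨Z ∪ W, hZ.union hW, hKZ.trans subset_union_left,
    union_subset hZV (hWVZ.trans sdiff_subset), ?_⟩
  rw [measure_union (disjoint_sdiff_right.mono_right hWVZ) hW.isClosed.measurableSet, hWμ, hQY,
    add_tsub_cancel_of_le hZQ.le]

end Approximation

section Matching

variable [MeasurableSpace X] {μ : Measure X} {A B : Set X} {f : A ≃ₜ B}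

structure IsNowhereDenseMeasurePreserving (μ : Measure X) (f : A ≃ₜ B) : Prop where
  isClosed_source : IsClosed A
  isNowhereDense_source : IsNowhereDense A
  isClosed_target : IsClosed B
  isNowhereDense_target : IsNowhereDense B
  measure_image : ∀ C : Set A, MeasurableSet (Subtype.val '' C) →
    μ (Subtype.val '' (f '' C)) = μ (Subtype.val '' C)

namespace IsNowhereDenseMeasurePreserving

theorem symm [BorelSpace X] (hf : IsNowhereDenseMeasurePreserving μ f) :
    IsNowhereDenseMeasurePreserving μ f.symm where
  isClosed_source := hf.isClosed_target
  isNowhereDense_source := hf.isNowhereDense_target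
  isClosed_target := hf.isClosed_source
  isNowhereDense_target := hf.isNowhereDense_source
  measure_image C hC := by
    have hC' : MeasurableSet C := by
      have h := measurable_subtype_coe (p := (· ∈ B)) hC
      rwa [Subtype.val_injective.preimage_image] at h
    have h := hf.measure_image (f.symm '' C) <| hf.isClosed_source.measurableSet.subtype_image <| by
      rw [f.image_symm]; exact hC'.preimage f.continuous.measurable
    rw [f.image_symm, image_preimage_eq C f.surjective] at h
    rw [f.image_symm, h]

theorem measure_image_preimage [OpensMeasurableSpace X] (hf : IsNowhereDenseMeasurePreserving μ f)
    {c : Set X} (hc : MeasurableSet c) :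
    μ (Subtype.val '' (f '' (Subtype.val ⁻¹' c))) = μ (c ∩ A) := by
  have h : Subtype.val '' (Subtype.val ⁻¹' c : Set A) = c ∩ A := by
    rw [Subtype.image_preimage_coe, inter_comm]
  rw [hf.measure_image _ (h ▸ hc.inter hf.isClosed_source.measurableSet), h]

theorem measure_inter_eq_of_mem_iff [OpensMeasurableSpace X]
    (hf : IsNowhereDenseMeasurePreserving μ f) {P Q : Set X} (hP : MeasurableSet P)
    (h : ∀ a : A, (a : X) ∈ P ↔ (f a : X) ∈ Q) : μ (Q ∩ B) = μ (P ∩ A) := by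
  rw [← hf.measure_image_preimage hP]
  congr 1
  ext y
  constructor
  · rintro ⟨hyQ, hyB⟩
    exact ⟨⟨y, hyB⟩, ⟨f.symm ⟨y, hyB⟩, (h _).2 (by simpa using hyQ), by simp⟩, rfl⟩
  · rintro ⟨_, ⟨a, ha, rfl⟩, rfl⟩
    exact ⟨(h a).1 ha, (f a).2⟩

end IsNowhereDenseMeasurePreserving

structure IsMatchedPair (μ : Measure X) (f : A ≃ₜ B) (P Q : Set X) : Prop where
  isClopen_left : IsClopen P
  isClopen_right : IsClopen Q
  measure_eq : μ P = μ Q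
  mem_iff : ∀ a : A, (a : X) ∈ P ↔ (f a : X) ∈ Q

namespace IsMatchedPair

theorem empty : IsMatchedPair μ f ∅ ∅ :=
  ⟨isClopen_empty, isClopen_empty, rfl, fun _ => Iff.rfl⟩

theorem symm {P Q : Set X} (h : IsMatchedPair μ f P Q) : IsMatchedPair μ f.symm Q P :=
  ⟨h.isClopen_right, h.isClopen_left, h.measure_eq.symm, fun b => by
    simpa using (h.mem_iff (f.symm b)).symm⟩

theorem sdiff [OpensMeasurableSpace X] [IsFiniteMeasure μ] {p q P Q : Set X}
    (hpq : IsMatchedPair μ f p q) (hPQ : IsMatchedPair μ f P Q) (hP : P ⊆ p) (hQ : Q ⊆ q) :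
    IsMatchedPair μ f (p \ P) (q \ Q) where
  isClopen_left := hpq.isClopen_left.diff hPQ.isClopen_left
  isClopen_right := hpq.isClopen_right.diff hPQ.isClopen_right
  measure_eq := by
    rw [measure_sdiff hP hPQ.isClopen_left.isClosed.measurableSet.nullMeasurableSet
        (measure_ne_top μ P),
      measure_sdiff hQ hPQ.isClopen_right.isClosed.measurableSet.nullMeasurableSet
        (measure_ne_top μ Q), hpq.measure_eq, hPQ.measure_eq]
  mem_iff a := (hpq.mem_iff a).and (hPQ.mem_iff a).not

end IsMatchedPair

structure IsMatching (μ : Measure X) (f : A ≃ₜ B) (l : Finset (Set X × Set X)) (U V : Set X) :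
    Prop where
  isMatchedPair : ∀ r ∈ l, IsMatchedPair μ f r.1 r.2
  pairwiseDisjoint_fst : (l : Set (Set X × Set X)).PairwiseDisjoint Prod.fst
  pairwiseDisjoint_snd : (l : Set (Set X × Set X)).PairwiseDisjoint Prod.snd
  biUnion_fst : ⋃ r ∈ l, r.1 = U
  biUnion_snd : ⋃ r ∈ l, r.2 = V

namespace IsMatching

variable {l : Finset (Set X × Set X)} {U V : Set X}

theorem empty : IsMatching μ f ∅ ∅ ∅ :=
  ⟨by simp, by simp, by simp, by simp, by simp⟩

theorem singleton {P Q : Set X} (h : IsMatchedPair μ f P Q) : IsMatching μ f {(P, Q)} P Q :=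
  ⟨by simpa using h, by simp, by simp, by simp, by simp⟩

theorem subset_fst (hl : IsMatching μ f l U V) {r : Set X × Set X} (hr : r ∈ l) : r.1 ⊆ U :=
  hl.biUnion_fst ▸ Finset.subset_set_biUnion_of_mem (f := Prod.fst) hr

theorem subset_snd (hl : IsMatching μ f l U V) {r : Set X × Set X} (hr : r ∈ l) : r.2 ⊆ V :=
  hl.biUnion_snd ▸ Finset.subset_set_biUnion_of_mem (f := Prod.snd) hr

theorem exists_mem_fst (hl : IsMatching μ f l U V) {x : X} (hx : x ∈ U) : ∃ r ∈ l, x ∈ r.1 := by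
  rw [← hl.biUnion_fst] at hx
  simpa using hx

theorem exists_mem_snd (hl : IsMatching μ f l U V) {y : X} (hy : y ∈ V) : ∃ r ∈ l, y ∈ r.2 := by
  rw [← hl.biUnion_snd] at hy
  simpa using hy

theorem eq_of_mem_fst (hl : IsMatching μ f l U V) {r r' : Set X × Set X} (hr : r ∈ l)
    (hr' : r' ∈ l) {x : X} (hx : x ∈ r.1) (hx' : x ∈ r'.1) : r = r' :=
  hl.pairwiseDisjoint_fst.elim_set hr hr' x hx hx'

theorem eq_of_mem_snd (hl : IsMatching μ f l U V) {r r' : Set X × Set X} (hr : r ∈ l)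
    (hr' : r' ∈ l) {y : X} (hy : y ∈ r.2) (hy' : y ∈ r'.2) : r = r' :=
  hl.pairwiseDisjoint_snd.elim_set hr hr' y hy hy'

theorem insert_sdiff [DecidableEq (Set X × Set X)] {p q P Q : Set X}
    (hl : IsMatching μ f l (p \ P) (q \ Q)) (hPQ : IsMatchedPair μ f P Q) (hP : P ⊆ p)
    (hQ : Q ⊆ q) : IsMatching μ f (insert (P, Q) l) p q where
  isMatchedPair := (Finset.forall_mem_insert _ _ _).2 ⟨hPQ, hl.isMatchedPair⟩
  pairwiseDisjoint_fst := by
    rw [Finset.coe_insert]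
    exact hl.pairwiseDisjoint_fst.insert fun r hr _ =>
      disjoint_sdiff_right.mono_right (hl.subset_fst hr)
  pairwiseDisjoint_snd := by
    rw [Finset.coe_insert]
    exact hl.pairwiseDisjoint_snd.insert fun r hr _ =>
      disjoint_sdiff_right.mono_right (hl.subset_snd hr)
  biUnion_fst := by rw [Finset.set_biUnion_insert, hl.biUnion_fst, union_sdiff_cancel hP]
  biUnion_snd := by rw [Finset.set_biUnion_insert, hl.biUnion_snd, union_sdiff_cancel hQ]

theorem symm (hl : IsMatching μ f l U V) :
    IsMatching μ f.symm (l.map (Equiv.prodComm _ _).toEmbedding) V U where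
  isMatchedPair := by
    simpa using fun Q P h => (hl.isMatchedPair (P, Q) h).symm
  pairwiseDisjoint_fst := by
    rw [Finset.coe_map]
    exact (Function.Embedding.injective _).injOn.pairwiseDisjoint_image.2 hl.pairwiseDisjoint_snd
  pairwiseDisjoint_snd := by
    rw [Finset.coe_map]
    exact (Function.Embedding.injective _).injOn.pairwiseDisjoint_image.2 hl.pairwiseDisjoint_fst
  biUnion_fst := by
    rw [← Finset.set_biUnion_coe, Finset.coe_map, biUnion_image, Finset.set_biUnion_coe]
    exact hl.biUnion_snd
  biUnion_snd := by
    rw [← Finset.set_biUnion_coe, Finset.coe_map, biUnion_image, Finset.set_biUnion_coe]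
    exact hl.biUnion_fst

theorem biUnion [DecidableEq (Set X × Set X)] (hl : IsMatching μ f l U V)
    {g : Set X × Set X → Finset (Set X × Set X)} (hg : ∀ r ∈ l, IsMatching μ f (g r) r.1 r.2) :
    IsMatching μ f (l.biUnion g) U V where
  isMatchedPair r hr := by
    obtain ⟨r', hr', hr⟩ := Finset.mem_biUnion.1 hr
    exact (hg r' hr').isMatchedPair r hr
  pairwiseDisjoint_fst := by
    rw [Finset.coe_biUnion]
    refine PairwiseDisjoint.biUnion (fun r hr r' hr' hne => ?_)
      fun r hr => (hg r hr).pairwiseDisjoint_fst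
    simp only [Function.onFun, iSup_eq_iUnion, Finset.mem_coe]
    rw [(hg r hr).biUnion_fst, (hg r' hr').biUnion_fst]
    exact hl.pairwiseDisjoint_fst hr hr' hne
  pairwiseDisjoint_snd := by
    rw [Finset.coe_biUnion]
    refine PairwiseDisjoint.biUnion (fun r hr r' hr' hne => ?_)
      fun r hr => (hg r hr).pairwiseDisjoint_snd
    simp only [Function.onFun, iSup_eq_iUnion, Finset.mem_coe]
    rw [(hg r hr).biUnion_snd, (hg r' hr').biUnion_snd]
    exact hl.pairwiseDisjoint_snd hr hr' hne
  biUnion_fst := by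
    rw [Finset.set_biUnion_biUnion, ← hl.biUnion_fst]
    exact iUnion₂_congr fun r hr => (hg r hr).biUnion_fst
  biUnion_snd := by
    rw [Finset.set_biUnion_biUnion, ← hl.biUnion_snd]
    exact iUnion₂_congr fun r hr => (hg r hr).biUnion_snd

end IsMatching

end Matching

section Refinement

variable [MeasurableSpace X] [OpensMeasurableSpace X] {μ : Measure X} {A B : Set X}
  {f : A ≃ₜ B}

theorem IsMatchedPair.exists_isMatching_subordinate_of_inter_eq_empty [IsFiniteMeasure μ]
    [μ.IsOpenPosMeasure] (hsc : HasSubsetCondition μ) {ps : Finset (Set X)}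
    (hps : ∀ c ∈ ps, IsClopen c) {p q : Set X} (hpq : IsMatchedPair μ f p q)
    (hp : p ⊆ ⋃ c ∈ ps, c) (hpA : p ∩ A = ∅) :
    ∃ l, IsMatching μ f l p q ∧ ∀ r ∈ l, ∃ c ∈ ps, r.1 ⊆ c := by
  classical
  induction ps using Finset.induction_on generalizing p q with
  | empty =>
    obtain rfl : p = ∅ := by simpa using hp
    obtain rfl : q = ∅ := by
      refine not_nonempty_iff_eq_empty.1 fun hq => ?_
      exact hpq.isClopen_right.isOpen.measure_ne_zero μ hq (by simp [← hpq.measure_eq])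
    exact ⟨∅, IsMatching.empty, by simp⟩
  | insert c ps _ ih =>
    have hc := hps c (Finset.mem_insert_self c ps)
    have hfq : ∀ a : A, (f a : X) ∉ q := fun a ha => hpA.subset ⟨(hpq.mem_iff a).2 ha, a.2⟩
    obtain ⟨Q, hQq, hQ, hQμ⟩ := hsc.exists_subset_of_le (hc.inter hpq.isClopen_left)
      hpq.isClopen_right (hpq.measure_eq ▸ measure_mono inter_subset_right)
    have hPQ : IsMatchedPair μ f (c ∩ p) Q := ⟨hc.inter hpq.isClopen_left, hQ, hQμ.symm,
      fun a => iff_of_false (fun ha => hfq a ((hpq.mem_iff a).1 ha.2)) (fun ha => hfq a (hQq ha))⟩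
    obtain ⟨l, hl, hlps⟩ := ih (fun c hc => hps c (Finset.mem_insert_of_mem hc))
      (hpq.sdiff hPQ inter_subset_right hQq)
      (fun x hx => by
        have := hp hx.1
        rw [Finset.set_biUnion_insert] at this
        exact this.resolve_left fun hxc => hx.2 ⟨hxc, hx.1⟩)
      (subset_empty_iff.1 (hpA ▸ inter_subset_inter_left A sdiff_subset))
    refine ⟨insert (c ∩ p, Q) l, hl.insert_sdiff hPQ inter_subset_right hQq, ?_⟩
    rw [Finset.forall_mem_insert]
    exact ⟨⟨c, Finset.mem_insert_self c ps, inter_subset_left⟩,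
      fun r hr => (hlps r hr).imp fun c' hc' => ⟨Finset.mem_insert_of_mem hc'.1, hc'.2⟩⟩

variable [CompactSpace X] [T2Space X] [TotallyDisconnectedSpace X] [μ.OuterRegular]

theorem IsNowhereDenseMeasurePreserving.exists_isClopen_mem_iff
    (hf : IsNowhereDenseMeasurePreserving μ f) {c q : Set X} (hc : IsClopen c) (hq : IsOpen q)
    (hcq : ∀ a : A, (a : X) ∈ c → (f a : X) ∈ q) {r : ℝ≥0∞} (hr : μ (c ∩ A) < r) :
    ∃ Q, IsClopen Q ∧ Q ⊆ q ∧ μ Q < r ∧ ∀ a : A, (a : X) ∈ c ↔ (f a : X) ∈ Q := by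
  have : CompactSpace A := isCompact_iff_compactSpace.1 hf.isClosed_source.isCompact
  -- `K = f (c ∩ A)` and `E = f (A \ c)` are disjoint compact sets covering `B`, so a clopen `Q`
  -- between `K` and `q \ E` satisfies `Q ∩ B = K`.
  set K := Subtype.val '' (f '' (Subtype.val ⁻¹' c))
  set E := Subtype.val '' (f '' (Subtype.val ⁻¹' cᶜ))
  have hK : IsCompact K :=
    ((hc.isClosed.preimage continuous_subtype_val).isCompact.image f.continuous).image
      continuous_subtype_val
  have hE : IsCompact E :=
    ((hc.isOpen.isClosed_compl.preimage continuous_subtype_val).isCompact.image f.continuous).image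
      continuous_subtype_val
  have hmemE : ∀ a : A, (a : X) ∉ c → (f a : X) ∈ E := fun a ha => ⟨f a, ⟨a, ha, rfl⟩, rfl⟩
  have hnotmemE : ∀ a : A, (f a : X) ∈ E → (a : X) ∉ c := by
    rintro a ⟨_, ⟨a', ha', rfl⟩, h⟩
    rwa [f.injective (Subtype.val_injective h)] at ha'
  have hKqE : K ⊆ q \ E := by
    rintro _ ⟨_, ⟨a, ha, rfl⟩, rfl⟩
    exact ⟨hcq a ha, fun h => hnotmemE a h ha⟩
  obtain ⟨Q, hQ, hKQ, hQqE, hQr⟩ := exists_isClopen_between_measure_lt hK.isClosed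
    (hq.sdiff hE.isClosed) hKqE (hf.measure_image_preimage hc.isClosed.measurableSet ▸ hr)
  refine ⟨Q, hQ, fun y hy => (hQqE hy).1, hQr, fun a => ⟨fun ha => hKQ ⟨f a, ⟨a, ha, rfl⟩, rfl⟩,
    fun ha => by_contra fun hna => (hQqE ha).2 (hmemE a hna)⟩⟩

variable [IsFiniteMeasure μ] [μ.IsOpenPosMeasure]

theorem IsNowhereDenseMeasurePreserving.exists_isMatchedPair
    (hf : IsNowhereDenseMeasurePreserving μ f) (hsc : HasSubsetCondition μ) {c q : Set X}
    (hc : IsClopen c) (hq : IsOpen q) (hcq : ∀ a : A, (a : X) ∈ c → (f a : X) ∈ q) :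
    ∃ P Q, IsMatchedPair μ f P Q ∧ c ∩ A ⊆ P ∧ P ⊆ c ∧ Q ⊆ q := by
  rcases (c ∩ A).eq_empty_or_nonempty with hcA | ⟨x, hxc, hxA⟩
  · exact ⟨∅, ∅, IsMatchedPair.empty, hcA.le, empty_subset _, empty_subset _⟩
  obtain ⟨Q, hQ, hQq, hQc, hcQ⟩ := hf.exists_isClopen_mem_iff hc hq hcq
    (measure_inter_lt_of_isNowhereDense hf.isClosed_source hf.isNowhereDense_source hc.isOpen
      ⟨x, hxc⟩)
  have hcAQ : μ (c ∩ A) < μ Q := by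
    rw [← hf.measure_inter_eq_of_mem_iff hc.isClosed.measurableSet hcQ]
    exact measure_inter_lt_of_isNowhereDense hf.isClosed_target hf.isNowhereDense_target
      hQ.isOpen ⟨_, (hcQ ⟨x, hxA⟩).1 hxc⟩
  obtain ⟨P, hP, hcAP, hPc, hPQ⟩ := hsc.exists_isClopen_between_measure_eq
    (hc.isClosed.inter hf.isClosed_source) hc hQ inter_subset_left hcAQ hQc.le
  refine ⟨P, Q, ⟨hP, hQ, hPQ, fun a => ?_⟩, hcAP, hPc, hQq⟩
  rw [← hcQ a]
  exact ⟨fun ha => hPc ha, fun ha => hcAP ⟨ha, a.2⟩⟩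

theorem IsNowhereDenseMeasurePreserving.exists_isMatching_subordinate
    (hf : IsNowhereDenseMeasurePreserving μ f) (hsc : HasSubsetCondition μ)
    {ps : Finset (Set X)} (hps : ∀ c ∈ ps, IsClopen c) {s : Finset (Set X)} (hs : s ⊆ ps)
    {p q : Set X} (hpq : IsMatchedPair μ f p q) (hp : p ⊆ ⋃ c ∈ ps, c)
    (hpA : p ∩ A ⊆ ⋃ c ∈ s, c) : ∃ l, IsMatching μ f l p q ∧ ∀ r ∈ l, ∃ c ∈ ps, r.1 ⊆ c := by
  classical
  induction s using Finset.induction_on generalizing p q with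
  | empty =>
    exact hpq.exists_isMatching_subordinate_of_inter_eq_empty hsc hps hp (by simpa using hpA)
  | insert c s _ ih =>
    have hcps := hs (Finset.mem_insert_self c s)
    obtain ⟨P, Q, hPQ, hcP, hPc, hQq⟩ := hf.exists_isMatchedPair hsc
      ((hps c hcps).inter hpq.isClopen_left) hpq.isClopen_right.isOpen
      fun a ha => (hpq.mem_iff a).1 ha.2
    have hPp : P ⊆ p := hPc.trans inter_subset_right
    obtain ⟨l, hl, hlps⟩ := ih ((Finset.insert_subset_iff.1 hs).2) (hpq.sdiff hPQ hPp hQq)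
      (sdiff_subset.trans hp) fun x ⟨⟨hxp, hxP⟩, hxA⟩ => by
        have := hpA ⟨hxp, hxA⟩
        rw [Finset.set_biUnion_insert] at this
        exact this.resolve_left fun hxc => hxP (hcP ⟨⟨hxc, hxp⟩, hxA⟩)
    refine ⟨insert (P, Q) l, hl.insert_sdiff hPQ hPp hQq, ?_⟩
    rw [Finset.forall_mem_insert]
    exact ⟨⟨c, hcps, hPc.trans inter_subset_left⟩, hlps⟩

end Refinement

section Metric

variable {X : Type*} [EMetricSpace X]

theorem exists_finset_isClopen_ediam_le_cover [CompactSpace X] [TotallyDisconnectedSpace X]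
    {ε : ℝ≥0∞} (hε : 0 < ε) :
    ∃ ps : Finset (Set X), (∀ c ∈ ps, IsClopen c ∧ ediam c ≤ ε) ∧ ⋃ c ∈ ps, c = univ := by
  classical
  choose V hV hxV hVx using fun x : X =>
    compact_exists_isClopen_in_isOpen isOpen_eball
      (mem_eball_self (x := x) (ENNReal.half_pos hε.ne'))
  obtain ⟨t, ht⟩ := isCompact_univ.elim_finite_subcover V (fun x => (hV x).isOpen)
    fun x _ => mem_iUnion.2 ⟨x, hxV x⟩
  refine ⟨t.image V, Finset.forall_mem_image.2 fun x _ => ⟨hV x, ?_⟩, ?_⟩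
  · exact (ediam_mono (hVx x)).trans (ediam_eball_le.trans (ENNReal.mul_div_cancel two_ne_zero
      ENNReal.ofNat_ne_top).le)
  · rw [Finset.set_biUnion_finset_image]
    exact univ_subset_iff.1 ht

variable [MeasurableSpace X] {μ : Measure X} {A B : Set X} {f : A ≃ₜ B}

structure IsMatchingSeq (μ : Measure X) (f : A ≃ₜ B) (s : ℕ → Finset (Set X × Set X)) :
    Prop where
  isMatching : ∀ n, IsMatching μ f (s n) univ univ
  refines : ∀ n, ∀ r ∈ s (n + 1), ∃ r' ∈ s n, r.1 ⊆ r'.1 ∧ r.2 ⊆ r'.2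
  ediam_le : ∀ n, ∀ r ∈ s n, ediam r.1 ≤ (n : ℝ≥0∞)⁻¹ ∧ ediam r.2 ≤ (n : ℝ≥0∞)⁻¹

namespace IsMatchingSeq

variable {s : ℕ → Finset (Set X × Set X)} (hs : IsMatchingSeq μ f s)
include hs

theorem symm : IsMatchingSeq μ f.symm fun n => (s n).map (Equiv.prodComm _ _).toEmbedding where
  isMatching n := (hs.isMatching n).symm
  refines n _ hr' := by
    obtain ⟨r, hr, rfl⟩ := Finset.mem_map.1 hr'
    obtain ⟨r', hr', h1, h2⟩ := hs.refines n r hr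
    exact ⟨r'.swap, Finset.mem_map_of_mem _ hr', h2, h1⟩
  ediam_le n _ hr' := by
    obtain ⟨r, hr, rfl⟩ := Finset.mem_map.1 hr'
    exact (hs.ediam_le n r hr).symm

theorem exists_ancestor {n m : ℕ} (hnm : n ≤ m) {r : Set X × Set X} (hr : r ∈ s m) :
    ∃ r' ∈ s n, r.1 ⊆ r'.1 ∧ r.2 ⊆ r'.2 := by
  induction m, hnm using Nat.le_induction generalizing r with
  | base => exact ⟨r, hr, subset_rfl, subset_rfl⟩
  | succ m _ ih =>
    obtain ⟨r', hr', h1, h2⟩ := hs.refines m r hr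
    obtain ⟨r'', hr'', h3, h4⟩ := ih hr'
    exact ⟨r'', hr'', h1.trans h3, h2.trans h4⟩

theorem subset_of_le_of_mem_snd {n m : ℕ} (hnm : n ≤ m) {r r' : Set X × Set X} (hr : r ∈ s n)
    (hr' : r' ∈ s m) {y : X} (hy : y ∈ r.2) (hy' : y ∈ r'.2) : r'.1 ⊆ r.1 ∧ r'.2 ⊆ r.2 := by
  obtain ⟨r'', hr'', h1, h2⟩ := hs.exists_ancestor hnm hr'
  obtain rfl := (hs.isMatching n).eq_of_mem_snd hr'' hr (h2 hy') hy
  exact ⟨h1, h2⟩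

theorem subset_of_le_of_mem_fst {n m : ℕ} (hnm : n ≤ m) {r r' : Set X × Set X} (hr : r ∈ s n)
    (hr' : r' ∈ s m) {x : X} (hx : x ∈ r.1) (hx' : x ∈ r'.1) : r'.1 ⊆ r.1 ∧ r'.2 ⊆ r.2 :=
  (hs.symm.subset_of_le_of_mem_snd hnm (Finset.mem_map_of_mem _ hr)
    (Finset.mem_map_of_mem _ hr') hx hx').symm

theorem eq_of_forall_mem_snd {y y' : X} (h : ∀ n, ∀ r ∈ s n, y ∈ r.2 → y' ∈ r.2) : y = y' := by
  refine eq_of_forall_edist_le fun ε hε => ?_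
  obtain ⟨n, hn⟩ := ENNReal.exists_inv_nat_lt hε.ne'
  obtain ⟨r, hr, hy⟩ := (hs.isMatching n).exists_mem_snd (mem_univ y)
  calc edist y y' ≤ ediam r.2 := edist_le_ediam_of_mem hy (h n r hr hy)
    _ ≤ (n : ℝ≥0∞)⁻¹ := (hs.ediam_le n r hr).2
    _ ≤ ε := hn.le

theorem eq_of_forall_mem_fst {x x' : X} (h : ∀ n, ∀ r ∈ s n, x ∈ r.1 → x' ∈ r.1) : x = x' :=
  hs.symm.eq_of_forall_mem_snd fun n _ hr' => by
    obtain ⟨r, hr, rfl⟩ := Finset.mem_map.1 hr'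
    exact h n r hr

theorem isTopologicalBasis_snd :
    TopologicalSpace.IsTopologicalBasis {t | ∃ n, ∃ r ∈ s n, r.2 = t} := by
  refine TopologicalSpace.isTopologicalBasis_of_isOpen_of_nhds ?_ fun y U hyU hU => ?_
  · rintro _ ⟨n, r, hr, rfl⟩
    exact ((hs.isMatching n).isMatchedPair r hr).isClopen_right.isOpen
  · obtain ⟨ε, hε, hεU⟩ := EMetric.isOpen_iff.1 hU y hyU
    obtain ⟨n, hn⟩ := ENNReal.exists_inv_nat_lt hε.ne'
    obtain ⟨r, hr, hyr⟩ := (hs.isMatching n).exists_mem_snd (mem_univ y)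
    refine ⟨r.2, ⟨n, r, hr, rfl⟩, hyr, fun z hz => hεU ?_⟩
    calc edist z y ≤ ediam r.2 := edist_le_ediam_of_mem hz hyr
      _ ≤ (n : ℝ≥0∞)⁻¹ := (hs.ediam_le n r hr).2
      _ < ε := hn

theorem exists_forall_mem_iff [CompactSpace X] [μ.IsOpenPosMeasure] (x : X) :
    ∃ y, ∀ n, ∀ r ∈ s n, x ∈ r.1 ↔ y ∈ r.2 := by
  choose r hr hxr using fun n => (hs.isMatching n).exists_mem_fst (mem_univ x)
  have hpair := fun n => (hs.isMatching n).isMatchedPair (r n) (hr n)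
  have hne : ∀ n, (r n).2.Nonempty := fun n => nonempty_of_measure_ne_zero <|
    (hpair n).measure_eq ▸ (hpair n).isClopen_left.isOpen.measure_ne_zero μ ⟨x, hxr n⟩
  obtain ⟨y, hy⟩ := IsCompact.nonempty_iInter_of_sequence_nonempty_isCompact_isClosed _
    (fun n => (hs.subset_of_le_of_mem_fst n.le_succ (hr n) (hr (n + 1)) (hxr n) (hxr (n + 1))).2)
    hne (hpair 0).isClopen_right.isClosed.isCompact fun n => (hpair n).isClopen_right.isClosed
  rw [mem_iInter] at hy
  refine ⟨y, fun n r' hr' => ⟨fun hx => ?_, fun hy' => ?_⟩⟩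
  · obtain rfl := (hs.isMatching n).eq_of_mem_fst hr' (hr n) hx (hxr n)
    exact hy n
  · obtain rfl := (hs.isMatching n).eq_of_mem_snd hr' (hr n) hy' (hy n)
    exact hxr n

theorem exists_homeomorph [CompactSpace X] [μ.IsOpenPosMeasure] :
    ∃ F : X ≃ₜ X, ∀ n, ∀ r ∈ s n, ∀ x, x ∈ r.1 ↔ F x ∈ r.2 := by
  choose F hF using hs.exists_forall_mem_iff
  have hinj : F.Injective := fun x x' h => hs.eq_of_forall_mem_fst fun n r hr hx =>
    (hF x' n r hr).2 (h ▸ (hF x n r hr).1 hx)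
  have hsurj : F.Surjective := fun y => by
    obtain ⟨x, hx⟩ := hs.symm.exists_forall_mem_iff y
    refine ⟨x, hs.eq_of_forall_mem_snd fun n r hr hFx => ?_⟩
    exact (hx n _ (Finset.mem_map_of_mem _ hr)).2 ((hF x n r hr).2 hFx)
  have hcont : Continuous F := by
    refine continuous_iff_continuousAt.2 fun x => EMetric.tendsto_nhds.2 fun ε hε => ?_
    obtain ⟨n, hn⟩ := ENNReal.exists_inv_nat_lt hε.ne'
    obtain ⟨r, hr, hxr⟩ := (hs.isMatching n).exists_mem_fst (mem_univ x)
    filter_upwards [((hs.isMatching n).isMatchedPair r hr).isClopen_left.isOpen.mem_nhds hxr]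
      with z hz
    calc edist (F z) (F x) ≤ ediam r.2 :=
          edist_le_ediam_of_mem ((hF z n r hr).1 hz) ((hF x n r hr).1 hxr)
      _ ≤ (n : ℝ≥0∞)⁻¹ := (hs.ediam_le n r hr).2
      _ < ε := hn
  exact ⟨(show Continuous (Equiv.ofBijective F ⟨hinj, hsurj⟩) from hcont).homeoOfEquivCompactToT2,
    fun n r hr x => hF x n r hr⟩

theorem measurePreserving [CompactSpace X] [BorelSpace X] [IsFiniteMeasure μ] {F : X ≃ₜ X}
    (hF : ∀ n, ∀ r ∈ s n, ∀ x, x ∈ r.1 ↔ F x ∈ r.2) : MeasurePreserving F μ μ := by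
  refine ⟨F.continuous.measurable, ?_⟩
  have hgen : ‹MeasurableSpace X› = .generateFrom {t | ∃ n, ∃ r ∈ s n, r.2 = t} := by
    rw [BorelSpace.measurable_eq (α := X), borel_eq_generateFrom_of_subbasis
      hs.isTopologicalBasis_snd.eq_generateFrom]
  have hpi : IsPiSystem {t | ∃ n, ∃ r ∈ s n, r.2 = t} := by
    rintro _ ⟨n, r, hr, rfl⟩ _ ⟨m, r', hr', rfl⟩ ⟨y, hy, hy'⟩
    rcases le_total n m with hnm | hmn
    · exact ⟨m, r', hr', (inter_eq_right.2 (hs.subset_of_le_of_mem_snd hnm hr hr' hy hy').2).symm⟩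
    · exact ⟨n, r, hr, (inter_eq_left.2 (hs.subset_of_le_of_mem_snd hmn hr' hr hy' hy).2).symm⟩
  refine ext_of_generate_finite _ hgen hpi ?_ (by simp [Measure.map_apply F.continuous.measurable])
  rintro _ ⟨n, r, hr, rfl⟩
  have hpair := (hs.isMatching n).isMatchedPair r hr
  have hpre : F ⁻¹' r.2 = r.1 := by
    ext x
    exact (hF n r hr x).symm
  rw [Measure.map_apply F.continuous.measurable hpair.isClopen_right.isClosed.measurableSet, hpre,
    hpair.measure_eq]

end IsMatchingSeq

namespace IsNowhereDenseMeasurePreserving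

variable [CompactSpace X] [TotallyDisconnectedSpace X] [BorelSpace X] [IsFiniteMeasure μ]
  [μ.IsOpenPosMeasure] (hf : IsNowhereDenseMeasurePreserving μ f) (hsc : HasSubsetCondition μ)
include hf hsc

theorem exists_isMatching_ediam_fst_le {p q : Set X} (hpq : IsMatchedPair μ f p q)
    {ε : ℝ≥0∞} (hε : 0 < ε) : ∃ l, IsMatching μ f l p q ∧ ∀ r ∈ l, ediam r.1 ≤ ε := by
  obtain ⟨ps, hps, hcover⟩ := exists_finset_isClopen_ediam_le_cover (X := X) hε
  obtain ⟨l, hl, hlps⟩ := hf.exists_isMatching_subordinate hsc (fun c hc => (hps c hc).1)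
    subset_rfl hpq (hcover ▸ subset_univ p) (hcover ▸ subset_univ _)
  refine ⟨l, hl, fun r hr => ?_⟩
  obtain ⟨c, hc, hrc⟩ := hlps r hr
  exact (ediam_mono hrc).trans (hps c hc).2

theorem exists_isMatching_ediam_le {p q : Set X} (hpq : IsMatchedPair μ f p q)
    {ε : ℝ≥0∞} (hε : 0 < ε) :
    ∃ l, IsMatching μ f l p q ∧ ∀ r ∈ l, ediam r.1 ≤ ε ∧ ediam r.2 ≤ ε := by
  classical
  obtain ⟨l, hl, hlε⟩ := hf.exists_isMatching_ediam_fst_le hsc hpq hε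
  choose! g hg hgε using fun r (hr : r ∈ l) =>
    hf.symm.exists_isMatching_ediam_fst_le hsc (hl.isMatchedPair r hr).symm hε
  refine ⟨l.biUnion fun r => (g r).map (Equiv.prodComm _ _).toEmbedding,
    hl.biUnion fun r hr => (hg r hr).symm, fun r hr => ?_⟩
  obtain ⟨r', hr', hr⟩ := Finset.mem_biUnion.1 hr
  obtain ⟨r'', hr'', rfl⟩ := Finset.mem_map.1 hr
  exact ⟨(ediam_mono ((hg r' hr').subset_snd hr'')).trans (hlε r' hr'), hgε r' hr' r'' hr''⟩

theorem exists_isMatchingSeq : ∃ s, IsMatchingSeq μ f s := by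
  classical
  have hstep : ∀ (n : ℕ) (l : Finset (Set X × Set X)), IsMatching μ f l univ univ →
      ∃ l', IsMatching μ f l' univ univ ∧ (∀ r ∈ l', ∃ r' ∈ l, r.1 ⊆ r'.1 ∧ r.2 ⊆ r'.2) ∧
        ∀ r ∈ l', ediam r.1 ≤ ((n + 1 : ℕ) : ℝ≥0∞)⁻¹ ∧ ediam r.2 ≤ ((n + 1 : ℕ) : ℝ≥0∞)⁻¹ := by
    intro n l hl
    choose! g hg hgε using fun r (hr : r ∈ l) => hf.exists_isMatching_ediam_le hsc
      (hl.isMatchedPair r hr) (ENNReal.inv_pos.2 (ENNReal.natCast_ne_top (n + 1)))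
    refine ⟨l.biUnion g, hl.biUnion hg, fun r hr => ?_, fun r hr => ?_⟩ <;>
      obtain ⟨r', hr', hr⟩ := Finset.mem_biUnion.1 hr
    · exact ⟨r', hr', (hg r' hr').subset_fst hr, (hg r' hr').subset_snd hr⟩
    · exact hgε r' hr' r hr
  choose! next hnext using hstep
  let s : ℕ → Finset (Set X × Set X) := fun n => Nat.rec {(univ, univ)} next n
  have hs : ∀ n, IsMatching μ f (s n) univ univ := by
    intro n
    induction n with
    | zero => exact IsMatching.singleton ⟨isClopen_univ, isClopen_univ, rfl, fun _ => Iff.rfl⟩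
    | succ n ih => exact (hnext n _ ih).1
  refine ⟨s, hs, fun n => (hnext n _ (hs n)).2.1, fun n => ?_⟩
  cases n with
  | zero => simp
  | succ n => exact (hnext n _ (hs n)).2.2

end IsNowhereDenseMeasurePreserving

end Metric

end GoodMeasure

theorem stmt2_general {X : Type*} [TopologicalSpace X] [CompactSpace X]
    [TopologicalSpace.MetrizableSpace X] [TotallyDisconnectedSpace X]
    [MeasurableSpace X] [BorelSpace X]
    (μ : Measure X) [IsFiniteMeasure μ]
    (hpos : ∀ U : Set X, IsOpen U → U.Nonempty → 0 < μ U)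
    (hsc : ∀ U V : Set X, IsClopen U → IsClopen V → μ U < μ V →
      ∃ W, W ⊆ V ∧ IsClopen W ∧ μ W = μ U)
    (A B : Set X) (hA : IsClosed A) (hAnd : IsNowhereDense A)
    (hB : IsClosed B) (hBnd : IsNowhereDense B)
    (f : A ≃ₜ B)
    (hf : ∀ C : Set A, MeasurableSet (Subtype.val '' C) →
      μ (Subtype.val '' (f '' C)) = μ (Subtype.val '' C)) :
    ∃ F : X ≃ₜ X, (∀ S : Set X, MeasurableSet S → μ (F '' S) = μ S) ∧
      ∀ a : A, F (a : X) = (f a : X) := by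
  let := TopologicalSpace.metrizableSpaceMetric X
  have : μ.IsOpenPosMeasure := ⟨fun U hU hne => (hpos U hU hne).ne'⟩
  obtain ⟨s, hs⟩ := GoodMeasure.IsNowhereDenseMeasurePreserving.exists_isMatchingSeq
    ⟨hA, hAnd, hB, hBnd, hf⟩ hsc
  obtain ⟨F, hF⟩ := hs.exists_homeomorph
  have hμF := (hs.measurePreserving hF).symm F.toMeasurableEquiv
  refine ⟨F, fun S hS => ?_, fun a => hs.eq_of_forall_mem_snd fun n r hr hFa => ?_⟩
  · rw [F.image_eq_preimage_symm]
    exact hμF.measure_preimage hS.nullMeasurableSet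
  · exact (((hs.isMatching n).isMatchedPair r hr).mem_iff a).1 ((hF n r hr a).2 hFa)

/-- Any measure-preserving homeomorphism between closed nowhere dense subsets of a
good Cantor measure space extends to a measure-preserving homeomorphism of the space. -/
theorem stmt2 {X : Type*} [TopologicalSpace X] [CompactSpace X] [T2Space X]
    [TopologicalSpace.MetrizableSpace X] [TotallyDisconnectedSpace X]
    [MeasurableSpace X] [BorelSpace X]
    (μ : Measure X) [IsFiniteMeasure μ]
    (hperf : ∀ x : X, ¬ IsOpen ({x} : Set X))
    (hcont : ∀ x : X, μ {x} = 0)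
    (hpos : ∀ U : Set X, IsOpen U → U.Nonempty → 0 < μ U)
    (hsc : ∀ U V : Set X, IsClopen U → IsClopen V → μ U < μ V →
      ∃ W, W ⊆ V ∧ IsClopen W ∧ μ W = μ U)
    (A B : Set X) (hA : IsClosed A) (hAnd : IsNowhereDense A)
    (hB : IsClosed B) (hBnd : IsNowhereDense B)
    (f : A ≃ₜ B)
    (hf : ∀ C : Set A, MeasurableSet (Subtype.val '' C) →
      μ (Subtype.val '' (f '' C)) = μ (Subtype.val '' C)) :
    ∃ F : X ≃ₜ X, (∀ S : Set X, MeasurableSet S → μ (F '' S) = μ S) ∧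
      ∀ a : A, F (a : X) = (f a : X) :=
  stmt2_general μ hpos hsc A B hA hAnd hB hBnd f hf
end
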